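/- arXiv:1612.03814 — 2 statements merged into one kernel-verified Lean document; each statement's English description precedes it below -/
import Mathlib

section
/- Let E1 and E2 be equivalence relations on V and suppose (E1, E2) is the unique LL-solution of the operator F = l_{E2} ∘ l_{E1}. Then |POS_{E1}(E2)| is at most the number of equivalence classes of E2, and |POS_{E2}(E1)| is at most the number of equivalence classes of E1. -/
variable {V : Type*}

/-- The lower approximation of `X` w.r.t. the equivalence relation `E`:
all points whose `E`-class is contained in `X`. -/
def lowerApprox (E : Setoid V) (X : Set V) : Set V := {x | {y | E.r x y} ⊆ X}

/-- The upper approximation of `X` w.r.t. the equivalence relation `E`: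
all points whose `E`-class meets `X`. -/
def upperApprox (E : Setoid V) (X : Set V) : Set V := {x | ({y | E.r x y} ∩ X).Nonempty}

/-- The positive region of `D` with respect to `C`: the union over the
`D`-equivalence classes of their `C`-lower approximations. -/
def posRegion (C D : Setoid V) : Set V := ⋃ x : V, lowerApprox C {y | D.r x y}

/-- `(E1, E2)` is an LL-solution of `F` if `F X = l_{E2}(l_{E1}(X))` for all `X`. -/
def IsLLSolution (E1 E2 : Setoid V) (F : Set V → Set V) : Prop :=
  ∀ X : Set V, F X = lowerApprox E2 (lowerApprox E1 X)

/-- `(E1, E2)` is the unique LL-solution of `F`. -/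
def IsUniqueLLSolution (E1 E2 : Setoid V) (F : Set V → Set V) : Prop :=
  IsLLSolution E1 E2 F ∧
    ∀ E3 E4 : Setoid V, IsLLSolution E3 E4 F → E3 = E1 ∧ E4 = E2

/-- `(E1, E2)` is a UU-solution of `F` if `F X = u_{E2}(u_{E1}(X))` for all `X`. -/
def IsUUSolution (E1 E2 : Setoid V) (F : Set V → Set V) : Prop :=
  ∀ X : Set V, F X = upperApprox E2 (upperApprox E1 X)

/-- `(E1, E2)` is the unique UU-solution of `F`. -/
def IsUniqueUUSolution (E1 E2 : Setoid V) (F : Set V → Set V) : Prop :=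
  IsUUSolution E1 E2 F ∧
    ∀ E3 E4 : Setoid V, IsUUSolution E3 E4 F → E3 = E1 ∧ E4 = E2

/-- `(E1, E2)` is a UL-solution of `F` if `F X = u_{E2}(l_{E1}(X))` for all `X`. -/
def IsULSolution (E1 E2 : Setoid V) (F : Set V → Set V) : Prop :=
  ∀ X : Set V, F X = upperApprox E2 (lowerApprox E1 X)

/-- `(E1, E2)` is the unique UL-solution of `F`. -/
def IsUniqueULSolution (E1 E2 : Setoid V) (F : Set V → Set V) : Prop :=
  IsULSolution E1 E2 F ∧
    ∀ E3 E4 : Setoid V, IsULSolution E3 E4 F → E3 = E1 ∧ E4 = E2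

/-- `(E1, E2)` is an LU-solution of `F` if `F X = l_{E2}(u_{E1}(X))` for all `X`. -/
def IsLUSolution (E1 E2 : Setoid V) (F : Set V → Set V) : Prop :=
  ∀ X : Set V, F X = lowerApprox E2 (upperApprox E1 X)

/-- `(E1, E2)` is the unique LU-solution of `F`. -/
def IsUniqueLUSolution (E1 E2 : Setoid V) (F : Set V → Set V) : Prop :=
  IsLUSolution E1 E2 F ∧
    ∀ E3 E4 : Setoid V, IsLUSolution E3 E4 F → E3 = E1 ∧ E4 = E2

/-!
`l_{E2} ∘ l_{E1}` is the lower approximation of the composite relation `E2 ∘ E1`, so uniqueness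
of the LL-solution says that `E1` is the only `E` with `E2 ∘ E = E2 ∘ E1`, and likewise for `E2`
(as `E1 ∘ E2` is the converse of `E2 ∘ E1`). If two distinct points of `POS_{E1}(E2)` lay in one
`E2`-class, then merging their `E1`-classes, or isolating one of them in its `E1`-class, would
change `E1` but not `E2 ∘ E1`. Hence `POS_{E1}(E2)` meets each `E2`-class at most once.
-/

open Relation

theorem mem_posRegion_iff {C D : Setoid V} {x : V} :
    x ∈ posRegion C D ↔ ∀ a, C x a → D x a := by
  simp only [posRegion, Set.mem_iUnion]
  exact ⟨fun ⟨w, hw⟩ a ha => D.trans' (D.symm' (hw (C.refl' x))) (hw ha),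
    fun hx => ⟨x, hx⟩⟩

theorem lowerApprox_lowerApprox (E1 E2 : Setoid V) (X : Set V) :
    lowerApprox E2 (lowerApprox E1 X) = {z | ∀ a, Comp E2 E1 z a → a ∈ X} := by
  ext z
  exact ⟨fun hz a ⟨w, hzw, hwa⟩ => hz hzw hwa, fun hz w hzw a hwa => hz a ⟨w, hzw, hwa⟩⟩

theorem isLLSolution_of_comp_eq {E1 E2 E3 E4 : Setoid V} (h : Comp E4 E3 = Comp E2 E1) :
    IsLLSolution E3 E4 (fun X => lowerApprox E2 (lowerApprox E1 X)) := by
  intro X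
  simp only [lowerApprox_lowerApprox, h]

theorem comp_setoid_eq_flip (E F : Setoid V) : Comp E F = flip (Comp F E) := by
  funext z a
  exact propext ⟨fun ⟨w, hzw, hwa⟩ => ⟨w, F.symm' hwa, E.symm' hzw⟩,
    fun ⟨w, haw, hwz⟩ => ⟨w, E.symm' hwz, F.symm' haw⟩⟩

theorem IsUniqueLLSolution.left_eq_of_comp_eq {E1 E2 E3 : Setoid V}
    (h : IsUniqueLLSolution E1 E2 (fun X => lowerApprox E2 (lowerApprox E1 X)))
    (h3 : Comp E2 E3 = Comp E2 E1) : E3 = E1 :=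
  (h.2 E3 E2 (isLLSolution_of_comp_eq h3)).1

theorem IsUniqueLLSolution.right_eq_of_comp_eq {E1 E2 E4 : Setoid V}
    (h : IsUniqueLLSolution E1 E2 (fun X => lowerApprox E2 (lowerApprox E1 X)))
    (h4 : Comp E1 E4 = Comp E1 E2) : E4 = E2 := by
  refine (h.2 E1 E4 (isLLSolution_of_comp_eq ?_)).2
  rw [comp_setoid_eq_flip, h4, ← comp_setoid_eq_flip]

namespace Setoid

def isolate (E : Setoid V) (x : V) : Setoid V where
  r a b := E a b ∧ (a = x ↔ b = x)
  iseqv :=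
    ⟨fun a => ⟨E.refl' a, Iff.rfl⟩, fun ⟨h, hx⟩ => ⟨E.symm' h, hx.symm⟩,
      fun ⟨h, hx⟩ ⟨h', hx'⟩ => ⟨E.trans' h h', hx.trans hx'⟩⟩

def mergeClasses (E : Setoid V) (x y : V) : Setoid V where
  r a b := E a b ∨ (E a x ∨ E a y) ∧ (E b x ∨ E b y)
  iseqv := by
    refine ⟨fun a => .inl (E.refl' a), ?_, ?_⟩ <;> grind [E.symm', E.trans']

end Setoid

section PositiveRegion

variable {A B : Setoid V} {x y : V}

theorem comp_isolate_eq (hx : x ∈ posRegion A B) (hxy : A x y) (hne : x ≠ y) :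
    Comp B (A.isolate x) = Comp B A := by
  rw [mem_posRegion_iff] at hx
  funext z a
  refine propext ⟨fun ⟨w, hzw, hwa⟩ => ⟨w, hzw, hwa.1⟩, ?_⟩
  rintro ⟨w, hzw, hwa⟩
  by_cases hax : a = x
  · subst hax
    exact ⟨a, B.trans' hzw (B.symm' (hx w (A.symm' hwa))), A.refl' a, Iff.rfl⟩
  by_cases hwx : w = x
  · subst hwx
    exact ⟨y, B.trans' hzw (hx y hxy), A.trans' (A.symm' hxy) hwa, by grind⟩
  · exact ⟨w, hzw, hwa, by grind⟩

theorem comp_mergeClasses_eq (hx : x ∈ posRegion A B) (hy : y ∈ posRegion A B) (hxy : B x y) :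
    Comp B (A.mergeClasses x y) = Comp B A := by
  rw [mem_posRegion_iff] at hx hy
  funext z a
  refine propext ⟨?_, fun ⟨w, hzw, hwa⟩ => ⟨w, hzw, .inl hwa⟩⟩
  rintro ⟨w, hzw, hwa | ⟨hwxy, haxy⟩⟩
  · exact ⟨w, hzw, hwa⟩
  have hzx : B z x := by
    rcases hwxy with hwx | hwy
    · exact B.trans' hzw (B.symm' (hx w (A.symm' hwx)))
    · exact B.trans' (B.trans' hzw (B.symm' (hy w (A.symm' hwy)))) (B.symm' hxy)
  rcases haxy with hax | hay
  · exact ⟨x, hzx, A.symm' hax⟩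
  · exact ⟨y, B.trans' hzx hxy, A.symm' hay⟩

theorem eq_of_mem_posRegion (hA : ∀ A' : Setoid V, Comp B A' = Comp B A → A' = A)
    (hx : x ∈ posRegion A B) (hy : y ∈ posRegion A B) (hxy : B x y) : x = y := by
  have hAxy : A x y := by
    rw [← hA _ (comp_mergeClasses_eq hx hy hxy)]
    exact .inr ⟨.inl (A.refl' x), .inr (A.refl' y)⟩
  by_contra hne
  have hiso : (A.isolate x) x y := by
    rwa [hA _ (comp_isolate_eq hx hAxy hne)]
  exact hne (hiso.2.mp rfl).symm

theorem card_posRegion_le_card_quotient [Finite V]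
    (hA : ∀ A' : Setoid V, Comp B A' = Comp B A → A' = A) :
    Nat.card (posRegion A B) ≤ Nat.card (Quotient B) := by
  refine Nat.card_le_card_of_injective (fun p => Quotient.mk B p.1) ?_
  rintro ⟨x, hx⟩ ⟨y, hy⟩ hxy
  exact Subtype.ext (eq_of_mem_posRegion hA hx hy (Quotient.exact hxy))

end PositiveRegion

theorem stmt_14_general [Fintype V] (E1 E2 : Setoid V)
    (h : IsUniqueLLSolution E1 E2 (fun X => lowerApprox E2 (lowerApprox E1 X))) :
    Nat.card (posRegion E1 E2) ≤ Nat.card (Quotient E2) ∧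
    Nat.card (posRegion E2 E1) ≤ Nat.card (Quotient E1) :=
  ⟨card_posRegion_le_card_quotient fun _ => h.left_eq_of_comp_eq,
    card_posRegion_le_card_quotient fun _ => h.right_eq_of_comp_eq⟩

theorem stmt_14 [Fintype V] [Nonempty V] (E1 E2 : Setoid V)
    (h : IsUniqueLLSolution E1 E2 (fun X => lowerApprox E2 (lowerApprox E1 X))) :
    Nat.card (posRegion E1 E2) ≤ Nat.card (Quotient E2) ∧
    Nat.card (posRegion E2 E1) ≤ Nat.card (Quotient E1) :=
  stmt_14_general E1 E2 h
end

section
/- Let E1 and E2 be equivalence relations on V and let F = l_{E2} ∘ u_{E1}, so that (E1, E2) is an LU-solution of F. Then (E1, E2) is the unique LU-solution of F if and only if both of the following hold: (i) for all x, y ∈ V with ¬(x E2 y), u_{E1}([x]_{E2}) ≠ u_{E1}([y]_{E2}); (ii) for every x ∈ V there exists z ∈ V such that [x]_{E2} ∩ [z]_{E1} has exactly one element. -/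
/-
Write `h_E(w) = u_{E1}([w]_E)` (this is `upperClass E1 E w`). As `u_{E1}` is a closure operator,
`w ∈ l_E(u_{E1} X)` iff `h_E(w) ⊆ u_{E1} X`, so `l_E ∘ u_{E1}` determines and is determined by
`h_E` (test with `X = [w]_E`). The first component of an LU-solution is forced: `l_E Y = V` iff
`Y = V`, and the sets `X` with `u_E X ≠ V` are those disjoint from some `E`-class. So `(E1, E2)` is
the unique solution iff `h_{E4} = h_{E2}` forces `E4 = E2`. Condition (i) says that no two
`E2`-classes can be merged without changing `h`, and (ii) that none can be split: if every
`E1`-class meeting `[x]_{E2}` meets it twice, splitting off one chosen point of each such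
intersection leaves `h` unchanged.
-/

variable {V : Type*}

open Set

lemma subset_upperApprox (E : Setoid V) (X : Set V) : X ⊆ upperApprox E X :=
  fun x hx => ⟨x, E.refl' x, hx⟩

lemma upperApprox_mono (E : Setoid V) {X Y : Set V} (h : X ⊆ Y) :
    upperApprox E X ⊆ upperApprox E Y :=
  fun _ ⟨y, hy, hyX⟩ => ⟨y, hy, h hyX⟩

lemma subset_upperApprox_iff {E : Setoid V} {A X : Set V} :
    A ⊆ upperApprox E X ↔ upperApprox E A ⊆ upperApprox E X := by
  refine ⟨fun h p ⟨q, hpq, hq⟩ => ?_, fun h => (subset_upperApprox E A).trans h⟩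
  obtain ⟨m, hqm, hm⟩ := h hq
  exact ⟨m, E.trans' hpq hqm, hm⟩

lemma lowerApprox_eq_univ_iff {E : Setoid V} {Y : Set V} :
    lowerApprox E Y = univ ↔ Y = univ := by
  simp only [eq_univ_iff_forall]
  exact ⟨fun h y => h y (E.refl' y), fun h _ y _ => h y⟩

lemma Setoid.exists_class_subset_of_upperApprox_eq_univ {A B : Setoid V}
    (h : ∀ X, upperApprox A X = univ → upperApprox B X = univ) (v : V) :
    ∃ p, {y | A.r p y} ⊆ {y | B.r v y} := by
  have hB : upperApprox B {y | ¬B.r v y} ≠ univ := fun hB =>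
    have ⟨_, hy, hny⟩ := (eq_univ_iff_forall.mp hB) v
    hny hy
  obtain ⟨p, hp⟩ := (ne_univ_iff_exists_notMem _).mp (mt (h _) hB)
  exact ⟨p, fun y hy => not_not.mp fun hny => hp ⟨y, hy, hny⟩⟩

lemma Setoid.eq_of_forall_exists_class_subset {A B : Setoid V}
    (hAB : ∀ v, ∃ p, {y | A.r p y} ⊆ {y | B.r v y})
    (hBA : ∀ v, ∃ p, {y | B.r p y} ⊆ {y | A.r v y}) : A = B := by
  ext v u
  obtain ⟨p, hp⟩ := hAB v
  obtain ⟨q, hq⟩ := hBA p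
  have hvq : B.r v q := hp (hq (B.refl' q))
  have hvp : A.r p v := hq (B.trans' (B.symm' hvq) (B.refl' v))
  constructor
  · exact fun h => hp (A.trans' hvp h)
  · exact fun h => A.trans' (A.symm' hvp) (hq (B.trans' (B.symm' hvq) h))

lemma Setoid.eq_of_upperApprox_eq_univ_iff {A B : Setoid V}
    (h : ∀ X, upperApprox A X = univ ↔ upperApprox B X = univ) : A = B :=
  Setoid.eq_of_forall_exists_class_subset
    (Setoid.exists_class_subset_of_upperApprox_eq_univ fun X => (h X).mp)
    (Setoid.exists_class_subset_of_upperApprox_eq_univ fun X => (h X).mpr)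

lemma eq_of_lowerApprox_upperApprox_eq {E1 E2 E3 E4 : Setoid V}
    (h : ∀ X, lowerApprox E2 (upperApprox E1 X) = lowerApprox E4 (upperApprox E3 X)) :
    E3 = E1 :=
  Setoid.eq_of_upperApprox_eq_univ_iff fun X =>
    lowerApprox_eq_univ_iff.symm.trans (h X ▸ lowerApprox_eq_univ_iff)

def upperClass (E1 E : Setoid V) (w : V) : Set V := upperApprox E1 {y | E.r w y}

lemma upperClass_mono {E1 E E' : Setoid V} (h : E ≤ E') : upperClass E1 E ≤ upperClass E1 E' :=
  fun _ => upperApprox_mono E1 fun _ hy => h hy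

lemma upperClass_eq_of_r {E1 E : Setoid V} {a b : V} (h : E.r a b) :
    upperClass E1 E a = upperClass E1 E b := by
  unfold upperClass
  congr 1
  ext y
  exact ⟨E.trans' (E.symm' h), E.trans' h⟩

lemma mem_lowerApprox_upperApprox_iff {E1 E : Setoid V} {X : Set V} {w : V} :
    w ∈ lowerApprox E (upperApprox E1 X) ↔ upperClass E1 E w ⊆ upperApprox E1 X :=
  subset_upperApprox_iff

lemma lowerApprox_upperApprox_eq_iff {E1 E E' : Setoid V} :
    (∀ X, lowerApprox E (upperApprox E1 X) = lowerApprox E' (upperApprox E1 X)) ↔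
      upperClass E1 E = upperClass E1 E' := by
  refine ⟨fun h => ?_, fun h X => by ext w; simp only [mem_lowerApprox_upperApprox_iff, h]⟩
  have hsub : ∀ {A B : Setoid V},
      (∀ X, lowerApprox A (upperApprox E1 X) = lowerApprox B (upperApprox E1 X)) →
      ∀ w, upperClass E1 B w ⊆ upperClass E1 A w := fun {A B} h w => by
    have hw : w ∈ lowerApprox A (upperApprox E1 {y | A.r w y}) :=
      mem_lowerApprox_upperApprox_iff.mpr subset_rfl
    rw [h] at hw
    exact mem_lowerApprox_upperApprox_iff.mp hw
  exact funext fun w => (hsub (fun X => (h X).symm) w).antisymm (hsub h w)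

lemma isLUSolution_iff {E1 E2 E3 E4 : Setoid V} :
    IsLUSolution E3 E4 (fun X => lowerApprox E2 (upperApprox E1 X)) ↔
      E3 = E1 ∧ upperClass E1 E4 = upperClass E1 E2 := by
  constructor
  · intro h
    obtain rfl := eq_of_lowerApprox_upperApprox_eq h
    exact ⟨rfl, (lowerApprox_upperApprox_eq_iff.mp h).symm⟩
  · rintro ⟨rfl, h⟩
    exact fun X => lowerApprox_upperApprox_eq_iff.mpr h.symm X

lemma isUniqueLUSolution_iff {E1 E2 : Setoid V} :
    IsUniqueLUSolution E1 E2 (fun X => lowerApprox E2 (upperApprox E1 X)) ↔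
      ∀ E4 : Setoid V, upperClass E1 E4 = upperClass E1 E2 → E4 = E2 := by
  simp only [IsUniqueLUSolution, isLUSolution_iff, true_and]
  constructor
  · exact fun h E4 hE4 => (h E1 E4 ⟨rfl, hE4⟩).2
  · rintro h E3 E4 ⟨rfl, hE4⟩
    exact ⟨rfl, h E4 hE4⟩

lemma le_of_upperClass_eq {E1 E2 E4 : Setoid V}
    (hsep : ∀ x y, ¬E2.r x y → upperApprox E1 {z | E2.r x z} ≠ upperApprox E1 {z | E2.r y z})
    (h : upperClass E1 E4 = upperClass E1 E2) : E4 ≤ E2 := by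
  intro a b hab
  by_contra hn
  apply hsep a b hn
  change upperClass E1 E2 a = upperClass E1 E2 b
  rw [← h, upperClass_eq_of_r hab]

lemma le_of_upperClass_eq_of_le {E1 E2 E4 : Setoid V}
    (hsingle : ∀ x, ∃ z a, {w | E2.r x w} ∩ {w | E1.r z w} = {a})
    (hle : E4 ≤ E2) (h : upperClass E1 E4 = upperClass E1 E2) : E2 ≤ E4 := by
  intro x y hxy
  obtain ⟨z, c, hc⟩ := hsingle x
  have hcx : c ∈ {w | E2.r x w} ∩ {w | E1.r z w} := hc ▸ mem_singleton c
  have hE4c : ∀ w, E2.r x w → E4.r w c := by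
    intro w hw
    have hz : z ∈ upperClass E1 E4 w := by
      rw [h]
      exact ⟨c, hcx.2, E2.trans' (E2.symm' hw) hcx.1⟩
    obtain ⟨q, hzq, hwq⟩ := hz
    have hq : q ∈ {w | E2.r x w} ∩ {w | E1.r z w} := ⟨E2.trans' hw (hle hwq), hzq⟩
    rw [hc, mem_singleton_iff] at hq
    exact hq ▸ hwq
  exact E4.trans' (hE4c x (E2.refl' x)) (E4.symm' (hE4c y hxy))

def Setoid.mergeClasses_s19 (E : Setoid V) (x y : V) : Setoid V where
  r w v := E.r w v ∨ ((E.r x w ∨ E.r y w) ∧ (E.r x v ∨ E.r y v))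
  iseqv := by
    have hM : ∀ {a b}, E.r a b → (E.r x a ∨ E.r y a) → (E.r x b ∨ E.r y b) :=
      fun hab => Or.imp (E.trans' · hab) (E.trans' · hab)
    refine ⟨fun a => Or.inl (E.refl' a), ?_, ?_⟩
    · rintro a b (h | ⟨ha, hb⟩)
      exacts [Or.inl (E.symm' h), Or.inr ⟨hb, ha⟩]
    · rintro a b c (h | ⟨ha, hb⟩) (h' | ⟨hb', hc⟩)
      · exact Or.inl (E.trans' h h')
      · exact Or.inr ⟨hM (E.symm' h) hb', hc⟩
      · exact Or.inr ⟨ha, hM h' hb⟩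
      · exact Or.inr ⟨ha, hc⟩

lemma Setoid.le_mergeClasses (E : Setoid V) (x y : V) : E ≤ E.mergeClasses_s19 x y :=
  fun _ _ => Or.inl

lemma Setoid.mergeClasses_r (E : Setoid V) (x y : V) : (E.mergeClasses_s19 x y).r x y :=
  Or.inr ⟨Or.inl (E.refl' x), Or.inr (E.refl' y)⟩

lemma upperClass_mergeClasses {E1 E2 : Setoid V} {x y : V}
    (hu : upperApprox E1 {z | E2.r x z} = upperApprox E1 {z | E2.r y z}) :
    upperClass E1 (E2.mergeClasses_s19 x y) = upperClass E1 E2 := by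
  have hM : ∀ v, (E2.r x v ∨ E2.r y v) → upperClass E1 E2 v = upperClass E1 E2 x := by
    rintro v (h | h)
    · exact (upperClass_eq_of_r h).symm
    · exact (upperClass_eq_of_r h).symm.trans hu.symm
  refine le_antisymm (fun w p ⟨q, hpq, hwq⟩ => ?_) (upperClass_mono (E2.le_mergeClasses x y))
  rcases hwq with hwq | ⟨hw, hq⟩
  · exact ⟨q, hpq, hwq⟩
  · have hp : p ∈ upperClass E1 E2 q := ⟨q, hpq, E2.refl' q⟩
    rwa [hM q hq, ← hM w hw] at hp

lemma upperClass_ne_of_unique {E1 E2 : Setoid V}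
    (hU : ∀ E4 : Setoid V, upperClass E1 E4 = upperClass E1 E2 → E4 = E2) {x y : V}
    (hxy : ¬E2.r x y) : upperApprox E1 {z | E2.r x z} ≠ upperApprox E1 {z | E2.r y z} :=
  fun hu => hxy (hU _ (upperClass_mergeClasses hu) ▸ E2.mergeClasses_r x y)

lemma Setoid.exists_subset_classes_meet_both (E : Setoid V) {C : Set V}
    (h : ∀ z a, C ∩ {w | E.r z w} ≠ {a}) :
    ∃ P ⊆ C, ∀ p, ({w | E.r p w} ∩ C).Nonempty →
      ({w | E.r p w} ∩ P).Nonempty ∧ ({w | E.r p w} ∩ (C \ P)).Nonempty := by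
  -- The instance `⟨a⟩` is a proof, so `rep` depends on `a` only through the class `[a]_E`.
  let rep : V → V := fun a => @Classical.epsilon V ⟨a⟩ (· ∈ {w | E.r a w} ∩ C)
  have rep_congr : ∀ {a b}, E.r a b → rep a = rep b := fun {a b} hab => by
    have hcls : {w | E.r a w} = {w | E.r b w} :=
      Set.ext fun w => ⟨E.trans' (E.symm' hab), E.trans' hab⟩
    simp only [rep, hcls]
  have rep_mem : ∀ {a}, ({w | E.r a w} ∩ C).Nonempty → rep a ∈ {w | E.r a w} ∩ C :=
    fun h => Classical.epsilon_spec h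
  refine ⟨{a ∈ C | rep a = a}, sep_subset _ _, fun p hp => ⟨⟨rep p, (rep_mem hp).1,
    (rep_mem hp).2, (rep_congr (rep_mem hp).1).symm⟩, ?_⟩⟩
  obtain ⟨b, hb, hbne⟩ : ∃ b ∈ C ∩ {w | E.r p w}, b ≠ rep p := by
    by_contra! hall
    exact h p (rep p) (eq_singleton_iff_unique_mem.mpr ⟨⟨(rep_mem hp).2, (rep_mem hp).1⟩, hall⟩)
  exact ⟨b, hb.2, hb.1, fun hbP => hbne (hbP.2.symm.trans (rep_congr hb.2).symm)⟩

lemma upperClass_inf_ker_eq {E1 E2 : Setoid V} {x : V} {P : Set V} (hPC : P ⊆ {w | E2.r x w})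
    (hP : ∀ p, ({w | E1.r p w} ∩ {w | E2.r x w}).Nonempty →
      ({w | E1.r p w} ∩ P).Nonempty ∧ ({w | E1.r p w} ∩ ({w | E2.r x w} \ P)).Nonempty) :
    upperClass E1 (E2 ⊓ Setoid.ker (· ∈ P)) = upperClass E1 E2 := by
  refine le_antisymm (upperClass_mono inf_le_left) fun w p ⟨q, hpq, hwq⟩ => ?_
  by_cases hxw : E2.r x w
  · have hne := hP p ⟨q, hpq, E2.trans' hxw hwq⟩
    by_cases hw : w ∈ P
    · obtain ⟨a, hpa, ha⟩ := hne.1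
      exact ⟨a, hpa, Setoid.inf_iff_and.mpr ⟨E2.trans' (E2.symm' hxw) (hPC ha),
        Setoid.ker_def.mpr (eq_iff_iff.mpr (iff_of_true hw ha))⟩⟩
    · obtain ⟨b, hpb, hxb, hb⟩ := hne.2
      exact ⟨b, hpb, Setoid.inf_iff_and.mpr ⟨E2.trans' (E2.symm' hxw) hxb,
        Setoid.ker_def.mpr (eq_iff_iff.mpr (iff_of_false hw hb))⟩⟩
  · have hout : ∀ {v}, E2.r w v → v ∉ P := fun hv hvP => hxw (E2.trans' (hPC hvP) (E2.symm' hv))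
    exact ⟨q, hpq, Setoid.inf_iff_and.mpr ⟨hwq,
      Setoid.ker_def.mpr (eq_iff_iff.mpr (iff_of_false (hout (E2.refl' w)) (hout hwq)))⟩⟩

lemma exists_inter_eq_singleton_of_unique {E1 E2 : Setoid V}
    (hU : ∀ E4 : Setoid V, upperClass E1 E4 = upperClass E1 E2 → E4 = E2) (x : V) :
    ∃ z a, {w | E2.r x w} ∩ {w | E1.r z w} = {a} := by
  by_contra! h
  obtain ⟨P, hPC, hP⟩ := E1.exists_subset_classes_meet_both h
  obtain ⟨⟨a, -, ha⟩, ⟨b, -, hxb, hb⟩⟩ := hP x ⟨x, E1.refl' x, E2.refl' x⟩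
  have hab : (E2 ⊓ Setoid.ker (· ∈ P)).r a b := by
    rw [hU _ (upperClass_inf_ker_eq hPC hP)]
    exact E2.trans' (E2.symm' (hPC ha)) hxb
  exact hb (Setoid.ker_def.mp (Setoid.inf_iff_and.mp hab).2 ▸ ha)

theorem stmt_19_general (E1 E2 : Setoid V) :
    IsUniqueLUSolution E1 E2 (fun X => lowerApprox E2 (upperApprox E1 X)) ↔
      ((∀ x y : V, ¬ E2.r x y →
          upperApprox E1 {z | E2.r x z} ≠ upperApprox E1 {z | E2.r y z}) ∧
       (∀ x : V, ∃ z : V, ∃ a : V, {w | E2.r x w} ∩ {w | E1.r z w} = {a})) := by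
  rw [isUniqueLUSolution_iff]
  constructor
  · exact fun hU => ⟨fun _ _ => upperClass_ne_of_unique hU, exists_inter_eq_singleton_of_unique hU⟩
  · rintro ⟨hsep, hsingle⟩ E4 hE4
    have hle := le_of_upperClass_eq hsep hE4
    exact le_antisymm hle (le_of_upperClass_eq_of_le hsingle hle hE4)

theorem stmt_19 [Fintype V] [Nonempty V] (E1 E2 : Setoid V) :
    IsUniqueLUSolution E1 E2 (fun X => lowerApprox E2 (upperApprox E1 X)) ↔
      ((∀ x y : V, ¬ E2.r x y →
          upperApprox E1 {z | E2.r x z} ≠ upperApprox E1 {z | E2.r y z}) ∧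
       (∀ x : V, ∃ z : V, ∃ a : V, {w | E2.r x w} ∩ {w | E1.r z w} = {a})) :=
  stmt_19_general E1 E2
end
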